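/- For any real numbers β₀ > 0, κ ≥ 0 and u_β ∈ ℝ, the double Gaussian integral evaluates as ∫_{ℝ} ∫_{u_β + κ}^{∞} e^{-(u_α² + u_β²)} du_α du_β = (π/2)·erfc(κ/√2), where erfc(x) = (2/√π)∫_x^∞ e^{-t²} dt. -/
import Mathlib

open Real MeasureTheory

/-- Complementary error function erfc(x) = (2/√π)∫_x^∞ e^{-t²} dt. -/
noncomputable def erfc (x : ℝ) : ℝ :=
  2 / Real.sqrt π * ∫ t in Set.Ioi x, Real.exp (-t ^ 2)

lemma integral_Ioi_shift (f : ℝ → ℝ) (a : ℝ) :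
    (∫ x in Set.Ioi a, f x) = ∫ x in Set.Ioi (0 : ℝ), f (x + a) := by
  have h := (measurePreserving_add_right (volume : Measure ℝ) a).setIntegral_preimage_emb
    (measurableEmbedding_addRight a) f (Set.Ioi a)
  rw [← h]
  congr 1
  ext x
  simp

/-- ∫_ℝ ∫_{u_β+κ}^∞ e^{-(u_α²+u_β²)} du_α du_β = (π/2)·erfc(κ/√2) for κ ≥ 0. -/
theorem gaussian_double_integral_erfc (κ : ℝ) (hκ : 0 ≤ κ) :
    (∫ uβ : ℝ, ∫ uα in Set.Ioi (uβ + κ), Real.exp (-(uα ^ 2 + uβ ^ 2))) =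
      π / 2 * erfc (κ / Real.sqrt 2) := by
  -- Step 1: shift the inner integral to start at 0
  have step1 : ∀ uβ : ℝ,
      (∫ uα in Set.Ioi (uβ + κ), Real.exp (-(uα ^ 2 + uβ ^ 2))) =
      ∫ v in Set.Ioi (0 : ℝ), Real.exp (-((v + uβ + κ) ^ 2 + uβ ^ 2)) := by
    intro uβ
    rw [integral_Ioi_shift (fun uα => Real.exp (-(uα ^ 2 + uβ ^ 2))) (uβ + κ)]
    congr 1
    ext v
    ring_nf
  simp_rw [step1]
  -- Integrability of the 2D integrand
  have key_ineq : ∀ x y : ℝ, x ^ 2 / 2 + (y + κ) ^ 2 / 4 ≤ (y + x + κ) ^ 2 + x ^ 2 := by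
    intro x y
    nlinarith [sq_nonneg (x + 2 * (y + κ) / 3), sq_nonneg (y + κ)]
  have hint : Integrable (fun p : ℝ × ℝ => Real.exp (-((p.2 + p.1 + κ) ^ 2 + p.1 ^ 2)))
      ((volume : Measure ℝ).prod ((volume : Measure ℝ).restrict (Set.Ioi 0))) := by
    have hg : Integrable
        (fun p : ℝ × ℝ => Real.exp (-(1/2) * p.1 ^ 2) * Real.exp (-(1/4) * (p.2 + κ) ^ 2))
        ((volume : Measure ℝ).prod ((volume : Measure ℝ).restrict (Set.Ioi 0))) := by
      exact Integrable.mul_prod (integrable_exp_neg_mul_sq (show (0:ℝ) < 1/2 by norm_num))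
        (((integrable_exp_neg_mul_sq (show (0:ℝ) < 1/4 by norm_num)).comp_add_right
          κ).restrict)
    refine hg.mono' ?_ ?_
    · exact (Continuous.aestronglyMeasurable (by fun_prop))
    · filter_upwards with p
      rw [Real.norm_eq_abs, abs_of_nonneg (Real.exp_pos _).le, ← Real.exp_add]
      apply Real.exp_le_exp.mpr
      have := key_ineq p.1 p.2
      nlinarith
  -- Step 2: swap the order of integration
  rw [integral_integral_swap hint]
  -- Step 3: compute the inner Gaussian integral over uβ
  have step3 : ∀ v : ℝ,
      (∫ x : ℝ, Real.exp (-((v + x + κ) ^ 2 + x ^ 2))) =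
      Real.sqrt (π / 2) * Real.exp (-(v + κ) ^ 2 / 2) := by
    intro v
    have expand : ∀ x : ℝ, -((v + x + κ) ^ 2 + x ^ 2) =
        -2 * (x + (v + κ) / 2) ^ 2 + (-(v + κ) ^ 2 / 2) := by intro x; ring
    simp_rw [expand, Real.exp_add]
    rw [integral_mul_const]
    rw [integral_add_right_eq_self (fun x => Real.exp (-2 * x ^ 2)) ((v + κ) / 2),
      integral_gaussian 2]
  simp_rw [step3]
  rw [integral_const_mul]
  -- Step 4: shift and rescale
  rw [show (∫ v in Set.Ioi (0:ℝ), Real.exp (-(v + κ) ^ 2 / 2)) =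
      ∫ w in Set.Ioi κ, Real.exp (-w ^ 2 / 2) by
    rw [integral_Ioi_shift (fun w => Real.exp (-w ^ 2 / 2)) κ]]
  have hs2 : (0:ℝ) < Real.sqrt 2 := Real.sqrt_pos.mpr (by norm_num)
  have rescale : (∫ w in Set.Ioi κ, Real.exp (-w ^ 2 / 2)) =
      Real.sqrt 2 * ∫ t in Set.Ioi (κ / Real.sqrt 2), Real.exp (-t ^ 2) := by
    have h := integral_comp_mul_left_Ioi (fun w => Real.exp (-w ^ 2 / 2))
      (κ / Real.sqrt 2) hs2
    rw [mul_div_cancel₀ κ hs2.ne'] at h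
    have : ∀ x : ℝ, Real.exp (-(Real.sqrt 2 * x) ^ 2 / 2) = Real.exp (-x ^ 2) := by
      intro x
      congr 1
      rw [mul_pow, Real.sq_sqrt (by norm_num : (0:ℝ) ≤ 2)]
      ring
    simp_rw [this] at h
    rw [smul_eq_mul] at h
    field_simp at h ⊢
    linarith [h]
  rw [rescale, erfc]
  have hπ : (0:ℝ) < π := Real.pi_pos
  have h1 : Real.sqrt (π / 2) * Real.sqrt 2 = Real.sqrt π := by
    rw [← Real.sqrt_mul (by positivity)]
    congr 1
    field_simp
  have hsπ : (0:ℝ) < Real.sqrt π := Real.sqrt_pos.mpr hπ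
  rw [← mul_assoc, h1]
  rw [show π / 2 * (2 / Real.sqrt π * ∫ t in Set.Ioi (κ / Real.sqrt 2), Real.exp (-t ^ 2)) =
      (π / Real.sqrt π) * ∫ t in Set.Ioi (κ / Real.sqrt 2), Real.exp (-t ^ 2) by ring]
  congr 1
  rw [eq_comm, div_eq_iff hsπ.ne']
  exact (Real.mul_self_sqrt hπ.le).symm
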